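/- arXiv:1009.1608 — 3 statements merged into one kernel-verified Lean document; each statement's English description precedes it below -/
import Mathlib

section
/- One-dimensional equivariant Sobolev embedding: for functions f on (0,∞) with f' ∈ L²(r dr) and f/r ∈ L²(r dr), one has ‖f‖_{L^∞(0,∞)} ≤ C(‖f'‖_{L²(r dr)} + ‖f/r‖_{L²(r dr)}). -/
open MeasureTheory

noncomputable section

/-- The measure `r dr` on `(0,∞)`. -/
def rMeasure : Measure ℝ :=
  (volume.restrict (Set.Ioi 0)).withDensity fun r => ENNReal.ofReal r

open Set

lemma enn_sq (x : ℝ) : ((‖x‖₊ : ENNReal))^2 = ENNReal.ofReal (x^2) := by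
  rw [← enorm_eq_nnnorm, Real.enorm_eq_ofReal_abs, ← ENNReal.ofReal_pow (abs_nonneg x), sq_abs]

lemma lintegral_rMeasure (g : ℝ → ENNReal) :
    ∫⁻ a, g a ∂rMeasure = ∫⁻ t in Ioi (0:ℝ), ENNReal.ofReal t * g t := by
  rw [rMeasure, lintegral_withDensity_eq_lintegral_mul_non_measurable _
    ENNReal.measurable_ofReal (by filter_upwards with x using ENNReal.ofReal_lt_top)]
  rfl

lemma eLpNorm_two_sq (h : ℝ → ℝ) :
    eLpNorm h 2 rMeasure ^ 2 = ∫⁻ t in Ioi (0:ℝ), ENNReal.ofReal t * ‖h t‖₊ ^ 2 := by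
  rw [eLpNorm_eq_lintegral_rpow_enorm_toReal (by norm_num) (by norm_num)]
  rw [← lintegral_rMeasure fun t => (‖h t‖₊ : ENNReal) ^ 2]
  have : ∀ x : ENNReal, x ^ ((2:ENNReal).toReal) = x ^ 2 := by
    intro x
    rw [ENNReal.toReal_ofNat, show ((2:ℝ)) = ((2:ℕ):ℝ) by norm_num, ENNReal.rpow_natCast]
  simp only [this]
  rw [← ENNReal.rpow_natCast _ 2, ← ENNReal.rpow_mul]
  norm_num
  rfl

/-- Pointwise bound `|2 f f'| ≤ (f'^2 + (f/t)^2) t` for `t > 0`. -/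
lemma pointwise_bound (f : ℝ → ℝ) {t : ℝ} (ht : (0:ℝ) < t) :
    ENNReal.ofReal |2 * f t * deriv f t|
      ≤ ENNReal.ofReal t * ((‖deriv f t‖₊ : ENNReal) ^ 2 + (‖f t / t‖₊ : ENNReal) ^ 2) := by
  rw [enn_sq, enn_sq, ← ENNReal.ofReal_add (sq_nonneg _) (sq_nonneg _),
    ← ENNReal.ofReal_mul ht.le]
  apply ENNReal.ofReal_le_ofReal
  set u := f t
  set v := deriv f t
  have h1 : (u / t)^2 * t = u^2 / t := by field_simp
  have h2 : 2 * |u| * |v| * t ≤ v^2 * t^2 + u^2 := by nlinarith [sq_nonneg (|v| * t - |u|), sq_abs u, sq_abs v]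
  have h3 : |2 * u * v| = 2 * |u| * |v| := by
    rw [abs_mul, abs_mul]; simp [abs_of_nonneg]
  rw [h3]
  have h4 : t * (v ^ 2 + (u/t)^2) = (v^2 * t^2 + u^2) / t := by field_simp
  rw [h4, le_div_iff₀ ht]
  linarith

/-- Core estimate: `f r ^ 2` bounded by total weighted Dirichlet-type integral. -/
lemma core_bound (f : ℝ → ℝ) (hf : ∀ r ∈ Set.Ioi (0 : ℝ), DifferentiableAt ℝ f r)
    (I : ENNReal)
    (hI : I = ∫⁻ t in Ioi (0:ℝ),
        ENNReal.ofReal t * ((‖deriv f t‖₊ : ENNReal) ^ 2 + (‖f t / t‖₊ : ENNReal) ^ 2))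
    (hfin : I ≠ ⊤) :
    ∀ r ∈ Set.Ioi (0:ℝ), ENNReal.ofReal ((f r)^2) ≤ I := by
  intro r hr
  rw [Set.mem_Ioi] at hr
  set a : ℝ := I.toReal with ha
  have hIa : I = ENNReal.ofReal a := by rw [ha, ENNReal.ofReal_toReal hfin]
  -- Step A : for 0 < s < r, f r ^ 2 ≤ f s ^ 2 + a
  have stepA : ∀ s, 0 < s → s < r → f r ^ 2 ≤ f s ^ 2 + a := by
    intro s hs hsr
    have hsub : Set.uIcc s r ⊆ Set.Ioi 0 := by
      rw [Set.uIcc_of_le hsr.le]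
      intro t ht; exact lt_of_lt_of_le hs ht.1
    set φ : ℝ → ℝ := fun t => 2 * f t * deriv f t with hφ
    have hderiv : ∀ t ∈ Set.uIcc s r, HasDerivAt (fun y => f y ^ 2) (φ t) t := by
      intro t ht
      have h := (hf t (hsub ht)).hasDerivAt.pow 2; simp at h; exact h
    -- bound on the lintegral of |φ| over Ioc s r
    have hIocsub : Ioc s r ⊆ Ioi (0:ℝ) := fun t ht => lt_trans hs ht.1
    have hlint : ∫⁻ t in Ioc s r, ENNReal.ofReal |φ t| ≤ I := by
      calc ∫⁻ t in Ioc s r, ENNReal.ofReal |φ t|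
          ≤ ∫⁻ t in Ioc s r,
              ENNReal.ofReal t * ((‖deriv f t‖₊ : ENNReal) ^ 2 + (‖f t / t‖₊ : ENNReal) ^ 2) := by
            refine lintegral_mono_ae ?_
            filter_upwards [ae_restrict_mem measurableSet_Ioc] with t ht
            exact pointwise_bound f (hIocsub ht)
        _ ≤ I := by rw [hI]; exact lintegral_mono_set hIocsub
    have hlintlt : ∫⁻ t in Ioc s r, ENNReal.ofReal |φ t| < ⊤ :=
      lt_of_le_of_lt hlint (lt_top_iff_ne_top.mpr hfin)
    -- integrability of φ on Ioc s r
    have hcont : ContinuousOn f (Ioc s r) := fun t ht =>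
      ((hf t (hIocsub ht)).continuousAt).continuousWithinAt
    have hfm : AEMeasurable f (volume.restrict (Ioc s r)) :=
      hcont.aemeasurable measurableSet_Ioc
    have hφm : AEStronglyMeasurable φ (volume.restrict (Ioc s r)) :=
      ((aemeasurable_const.mul hfm).mul (measurable_deriv f).aemeasurable).aestronglyMeasurable
    have hφint : IntegrableOn φ (Ioc s r) := by
      refine ⟨hφm, ?_⟩
      simpa [HasFiniteIntegral, Real.enorm_eq_ofReal_abs] using hlintlt
    have hInt : IntervalIntegrable φ volume s r := by
      rw [intervalIntegrable_iff_integrableOn_Ioc_of_le hsr.le]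
      exact hφint
    have hFTC : ∫ t in s..r, φ t = f r ^ 2 - f s ^ 2 :=
      intervalIntegral.integral_eq_sub_of_hasDerivAt hderiv hInt
    have hbd : ∫ t in s..r, φ t ≤ a := by
      rw [intervalIntegral.integral_of_le hsr.le]
      calc ∫ t in Ioc s r, φ t ≤ ‖∫ t in Ioc s r, φ t‖ := le_abs_self _
        _ ≤ (∫⁻ t in Ioc s r, ENNReal.ofReal ‖φ t‖).toReal := norm_integral_le_lintegral_norm φ
        _ ≤ I.toReal := by
            apply ENNReal.toReal_mono hfin
            simpa [Real.norm_eq_abs] using hlint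
    linarith [hFTC ▸ hbd]
  -- Step B : for every ε > 0 there is s ∈ (0, r) with f s ^ 2 < ε
  have stepB : ∀ ε : ℝ, 0 < ε → ∃ s, 0 < s ∧ s < r ∧ f s ^ 2 < ε := by
    intro ε hε
    by_contra hcon
    push_neg at hcon
    have hge : ∀ s, 0 < s → s < r → ε ≤ f s ^ 2 := fun s h1 h2 => hcon s h1 h2
    have hms : ∫⁻ t in Ioo (0:ℝ) r, ENNReal.ofReal (ε / t) ≤ I := by
      calc ∫⁻ t in Ioo (0:ℝ) r, ENNReal.ofReal (ε / t)
          ≤ ∫⁻ t in Ioo (0:ℝ) r,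
              ENNReal.ofReal t * ((‖deriv f t‖₊ : ENNReal) ^ 2 + (‖f t / t‖₊ : ENNReal) ^ 2) := by
            refine lintegral_mono_ae ?_
            filter_upwards [ae_restrict_mem measurableSet_Ioo] with t ht
            have ht0 : (0:ℝ) < t := ht.1
            have : ENNReal.ofReal (ε / t) ≤ ENNReal.ofReal t * (‖f t / t‖₊ : ENNReal) ^ 2 := by
              rw [enn_sq, ← ENNReal.ofReal_mul ht0.le]
              apply ENNReal.ofReal_le_ofReal
              have h1 : t * (f t / t) ^ 2 = f t ^ 2 / t := by field_simp
              rw [h1]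
              gcongr
              exact hge t ht.1 ht.2
            calc ENNReal.ofReal (ε / t) ≤ ENNReal.ofReal t * (‖f t / t‖₊ : ENNReal) ^ 2 := this
              _ ≤ _ := by
                  rw [mul_add]
                  exact le_add_self
        _ ≤ I := by rw [hI]; exact lintegral_mono_set (fun t ht => ht.1)
    have hlt : ∫⁻ t in Ioo (0:ℝ) r, ENNReal.ofReal (ε / t) < ⊤ :=
      lt_of_le_of_lt hms (lt_top_iff_ne_top.mpr hfin)
    -- derive integrability of t⁻¹ on (0, r), a contradiction
    have hint : IntegrableOn (fun t => ε / t) (Ioo (0:ℝ) r) := by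
      refine ⟨(measurable_const.div measurable_id).aestronglyMeasurable, ?_⟩
      rw [HasFiniteIntegral]
      calc ∫⁻ t in Ioo (0:ℝ) r, (‖ε / t‖₊ : ENNReal)
          = ∫⁻ t in Ioo (0:ℝ) r, ENNReal.ofReal (ε / t) := by
            refine lintegral_congr_ae ?_
            filter_upwards [ae_restrict_mem measurableSet_Ioo] with t ht
            rw [← enorm_eq_nnnorm, Real.enorm_eq_ofReal_abs, abs_of_nonneg (div_nonneg hε.le ht.1.le)]
        _ < ⊤ := hlt
    have hinv : IntegrableOn (fun t : ℝ => t⁻¹) (Ioo (0:ℝ) r) := by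
      have h2 := hint.const_mul ε⁻¹
      refine IntegrableOn.congr_fun h2 ?_ measurableSet_Ioo
      intro t ht
      show ε⁻¹ * (ε / t) = t⁻¹
      field_simp
    have hrpow : IntegrableOn (fun t : ℝ => t ^ (-1:ℝ)) (Ioo (0:ℝ) r) := by
      refine hinv.congr_fun ?_ measurableSet_Ioo
      intro t ht
      show t⁻¹ = t ^ (-1:ℝ)
      rw [Real.rpow_neg ht.1.le, Real.rpow_one]
    have := (intervalIntegral.integrableOn_Ioo_rpow_iff hr).mp hrpow
    linarith
  -- combine
  rw [hIa]
  apply ENNReal.ofReal_le_ofReal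
  apply le_of_forall_pos_le_add
  intro ε hε
  obtain ⟨s, hs0, hsr, hsε⟩ := stepB ε hε
  have := stepA s hs0 hsr
  linarith

/-- One-dimensional equivariant Sobolev embedding: for functions `f` on `(0,∞)`,
`‖f‖_{L^∞(0,∞)} ≤ C (‖f'‖_{L²(r dr)} + ‖f/r‖_{L²(r dr)})`. -/
theorem equivariant_sobolev_embedding :
    ∃ C : NNReal, ∀ f : ℝ → ℝ,
      (∀ r ∈ Set.Ioi (0 : ℝ), DifferentiableAt ℝ f r) →
      eLpNorm f ⊤ (volume.restrict (Set.Ioi 0))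
        ≤ C * (eLpNorm (deriv f) 2 rMeasure + eLpNorm (fun r => f r / r) 2 rMeasure) := by
  refine ⟨1, fun f hf => ?_⟩
  set A := eLpNorm (deriv f) 2 rMeasure with hA
  set B := eLpNorm (fun r => f r / r) 2 rMeasure with hB
  rw [ENNReal.coe_one, one_mul]
  by_cases htop : A = ⊤ ∨ B = ⊤
  · rcases htop with h | h <;> simp [h]
  push_neg at htop
  obtain ⟨hAtop, hBtop⟩ := htop
  set I : ENNReal := ∫⁻ t in Ioi (0:ℝ),
      ENNReal.ofReal t * ((‖deriv f t‖₊ : ENNReal) ^ 2 + (‖f t / t‖₊ : ENNReal) ^ 2) with hIdef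
  have hIsum : I = A ^ 2 + B ^ 2 := by
    rw [hA, hB, eLpNorm_two_sq, eLpNorm_two_sq, hIdef, ← lintegral_add_left]
    · apply lintegral_congr
      intro t
      ring
    · exact (ENNReal.measurable_ofReal.comp measurable_id).mul
        (((measurable_deriv f).nnnorm.coe_nnreal_ennreal).pow_const 2)
  have hfin : I ≠ ⊤ := by
    rw [hIsum]
    exact ENNReal.add_ne_top.mpr ⟨ENNReal.pow_ne_top hAtop, ENNReal.pow_ne_top hBtop⟩
  have hcore := core_bound f hf I hIdef hfin
  rw [eLpNorm_exponent_top, eLpNormEssSup]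
  refine essSup_le_of_ae_le _ ?_
  filter_upwards [ae_restrict_mem measurableSet_Ioi] with r hr
  have h1 : ((‖f r‖₊ : ENNReal)) ^ 2 ≤ (A + B) ^ 2 := by
    rw [enn_sq]
    calc ENNReal.ofReal (f r ^ 2) ≤ I := hcore r hr
      _ = A ^ 2 + B ^ 2 := hIsum
      _ ≤ (A + B) ^ 2 := by
          have : (A + B) ^ 2 = A ^ 2 + B ^ 2 + 2 * A * B := by ring
          rw [this]
          exact le_self_add
  have := ENNReal.rpow_le_rpow (z := (1/2 : ℝ)) h1 (by norm_num)
  rw [← ENNReal.rpow_natCast (‖f r‖₊ : ENNReal) 2, ← ENNReal.rpow_natCast (A + B) 2,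
    ← ENNReal.rpow_mul, ← ENNReal.rpow_mul] at this
  norm_num at this
  exact this
end
end

section
/- If f : (0,∞) → ℝ satisfies f' ∈ L²(r dr) and f/r ∈ L²(r dr), then f² is continuous on (0,∞), has limits at 0 and ∞, and both limits are 0. -/
open MeasureTheory

open Set Filter Topology

noncomputable section

private lemma rMeasure_transfer (g : ℝ → ℝ) (hg : Integrable g rMeasure) :
    IntegrableOn (fun r => g r * r) (Ioi 0) volume := by
  rw [rMeasure, integrable_withDensity_iff ENNReal.measurable_ofReal
    (Eventually.of_forall fun x => ENNReal.ofReal_lt_top)] at hg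
  refine (integrable_congr ?_).mp hg
  filter_upwards [ae_restrict_mem measurableSet_Ioi] with x hx
  rw [ENNReal.toReal_ofReal (le_of_lt hx)]

private lemma two_div_mul (L : ℝ) (hL : L ≠ 0) :
    (fun r : ℝ => r⁻¹) = fun r => (2 / L) * ((L / 2) * r⁻¹) := by
  funext r
  have h : (2 / L) * (L / 2) = 1 := by field_simp
  rw [← mul_assoc, h, one_mul]

private lemma limit_zero_top {g : ℝ → ℝ} (hg : ∀ r, 0 ≤ g r)
    (hint : IntegrableOn (fun r => g r / r) (Ioi 0) volume)
    {L : ℝ} (hL : Tendsto g atTop (𝓝 L)) : L = 0 := by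
  by_contra hL0
  have hLpos : 0 < L := lt_of_le_of_ne (ge_of_tendsto' hL hg) (Ne.symm hL0)
  obtain ⟨R, hR⟩ := eventually_atTop.mp (hL.eventually (lt_mem_nhds (half_lt_self hLpos)))
  set R' : ℝ := max R 1 with hR'
  have hR'pos : (0:ℝ) < R' := lt_of_lt_of_le zero_lt_one (le_max_right R 1)
  have hmono : IntegrableOn (fun r => g r / r) (Ioi R') volume :=
    hint.mono_set (Ioi_subset_Ioi (le_of_lt hR'pos))
  have hconst : IntegrableOn (fun r => (L / 2) * r⁻¹) (Ioi R') volume := by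
    refine Integrable.mono' hmono
      ((measurable_inv.const_mul (L / 2)).aestronglyMeasurable) ?_
    filter_upwards [ae_restrict_mem measurableSet_Ioi] with r hr
    have hr0 : (0:ℝ) < r := lt_trans hR'pos hr
    have hgr : L / 2 ≤ g r := le_of_lt (hR r (le_trans (le_max_left R 1) (le_of_lt hr)))
    rw [Real.norm_eq_abs, abs_of_nonneg (by positivity), mul_comm, ← div_eq_inv_mul]
    exact div_le_div_of_nonneg_right hgr hr0.le
  have hinv : IntegrableOn (fun r : ℝ => r⁻¹) (Ioi R') volume := by
    rw [two_div_mul L hL0]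
    exact hconst.const_mul (2 / L)
  have h5 : IntegrableOn (fun x : ℝ => x ^ (-1 : ℝ)) (Ioi R') volume :=
    hinv.congr_fun (fun x _ => (Real.rpow_neg_one x).symm) measurableSet_Ioi
  have := (integrableOn_Ioi_rpow_iff hR'pos).mp h5
  linarith

private lemma limit_zero_bot {g : ℝ → ℝ} (hg : ∀ r, 0 ≤ g r)
    (hint : IntegrableOn (fun r => g r / r) (Ioi 0) volume)
    {L : ℝ} (hL : Tendsto g (nhdsWithin 0 (Ioi 0)) (𝓝 L)) : L = 0 := by
  by_contra hL0
  have hLpos : 0 < L := lt_of_le_of_ne (ge_of_tendsto' hL hg) (Ne.symm hL0)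
  obtain ⟨ε, hε, hsub⟩ := ((nhdsGT_basis (0:ℝ)).eventually_iff).mp
    (hL.eventually (lt_mem_nhds (half_lt_self hLpos)))
  have hmono : IntegrableOn (fun r => g r / r) (Ioo 0 ε) volume :=
    hint.mono_set Ioo_subset_Ioi_self
  have hconst : IntegrableOn (fun r => (L / 2) * r⁻¹) (Ioo 0 ε) volume := by
    refine Integrable.mono' hmono
      ((measurable_inv.const_mul (L / 2)).aestronglyMeasurable) ?_
    filter_upwards [ae_restrict_mem measurableSet_Ioo] with r hr
    have hr0 : (0:ℝ) < r := hr.1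
    have hgr : L / 2 ≤ g r := le_of_lt (hsub hr)
    rw [Real.norm_eq_abs, abs_of_nonneg (by positivity), mul_comm, ← div_eq_inv_mul]
    exact div_le_div_of_nonneg_right hgr hr0.le
  have hinv : IntegrableOn (fun r : ℝ => r⁻¹) (Ioo 0 ε) volume := by
    rw [two_div_mul L hL0]
    exact hconst.const_mul (2 / L)
  have h5 : IntegrableOn (fun x : ℝ => x ^ (-1 : ℝ)) (Ioo 0 ε) volume :=
    hinv.congr_fun (fun x _ => (Real.rpow_neg_one x).symm) measurableSet_Ioo
  have := (intervalIntegral.integrableOn_Ioo_rpow_iff hε).mp h5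
  linarith

/-- If `f : (0,∞) → ℝ` satisfies `f' ∈ L²(r dr)` and `f/r ∈ L²(r dr)`, then `f²` is
continuous on `(0,∞)`, has limits at `0` and `∞`, and both limits are `0`. -/
theorem sq_tendsto_zero (f : ℝ → ℝ)
    (hdiff : ∀ r ∈ Set.Ioi (0 : ℝ), DifferentiableAt ℝ f r)
    (h1 : eLpNorm (deriv f) 2 rMeasure < ⊤)
    (h2 : eLpNorm (fun r => f r / r) 2 rMeasure < ⊤) :
    ContinuousOn (fun r => (f r) ^ 2) (Set.Ioi 0)
      ∧ Filter.Tendsto (fun r => (f r) ^ 2) (nhdsWithin 0 (Set.Ioi 0)) (nhds 0)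
      ∧ Filter.Tendsto (fun r => (f r) ^ 2) Filter.atTop (nhds 0) := by
  have hc : ContinuousOn f (Ioi 0) := fun x hx => (hdiff x hx).continuousAt.continuousWithinAt
  have hcont : ContinuousOn (fun r => (f r) ^ 2) (Set.Ioi 0) := hc.pow 2
  have hac : rMeasure ≪ volume.restrict (Set.Ioi 0) := withDensity_absolutelyContinuous _ _
  have hm1 : AEStronglyMeasurable (deriv f) rMeasure :=
    (stronglyMeasurable_deriv f).aestronglyMeasurable
  have hm2 : AEStronglyMeasurable (fun r => f r / r) rMeasure :=
    ((hc.div continuousOn_id (fun x hx => ne_of_gt hx)).aestronglyMeasurable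
      measurableSet_Ioi).mono_ac hac
  have Hd : MemLp (deriv f) 2 rMeasure := ⟨hm1, h1⟩
  have Hq : MemLp (fun r => f r / r) 2 rMeasure := ⟨hm2, h2⟩
  have Hprod : Integrable (fun r => (f r / r) * deriv f r) rMeasure := by
    have := Hd.smul Hq (r := 1)
    simpa [smul_eq_mul, Pi.mul_def] using memLp_one_iff_integrable.mp this
  have Hsq : Integrable (fun r => (f r / r) ^ 2) rMeasure := Hq.integrable_sq
  -- integrability of 2 f f' on (0,∞) w.r.t. Lebesgue
  have Hh : IntegrableOn (fun r => 2 * (f r * deriv f r)) (Set.Ioi 0) volume := by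
    have h0 : IntegrableOn (fun r => 2 * ((f r / r * deriv f r) * r)) (Ioi 0) volume :=
      (rMeasure_transfer _ Hprod).const_mul 2
    refine h0.congr_fun (fun r hr => ?_) measurableSet_Ioi
    have hr0 : (r:ℝ) ≠ 0 := ne_of_gt hr
    field_simp
  have Hsq' : IntegrableOn (fun r => (f r) ^ 2 / r) (Set.Ioi 0) volume := by
    refine (rMeasure_transfer _ Hsq).congr_fun (fun r hr => ?_) measurableSet_Ioi
    have hr0 : (r:ℝ) ≠ 0 := ne_of_gt hr
    field_simp
  set h : ℝ → ℝ := (Set.Ioi (0:ℝ)).indicator (fun r => 2 * (f r * deriv f r)) with hh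
  have Hhtil : Integrable h volume := Hh.integrable_indicator measurableSet_Ioi
  set F : ℝ → ℝ := fun x => ∫ t in (0:ℝ)..x, h t with hFdef
  have hF : Continuous F := Hhtil.continuous_primitive 0
  have key : ∀ a ∈ Set.Ioi (0:ℝ), ∀ b ∈ Set.Ioi (0:ℝ),
      (f b) ^ 2 = (f a) ^ 2 + (F b - F a) := by
    intro a ha b hb
    have hsub : Set.uIcc a b ⊆ Set.Ioi 0 := fun x hx =>
      lt_of_lt_of_le (lt_min ha hb) hx.1
    have hFb : F b - F a = ∫ t in a..b, h t :=
      intervalIntegral.integral_interval_sub_left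
        (Hhtil.intervalIntegrable) (Hhtil.intervalIntegrable)
    have hftc : ∫ t in a..b, h t = (f b) ^ 2 - (f a) ^ 2 := by
      apply intervalIntegral.integral_eq_sub_of_hasDerivAt
      · intro x hx
        have hx0 := hsub hx
        have H := ((hdiff x hx0).hasDerivAt).fun_pow 2
        have hxe : h x = 2 * (f x * deriv f x) := Set.indicator_of_mem hx0 _
        rw [hxe]
        refine H.congr_deriv ?_
        push_cast
        ring
      · exact Hhtil.intervalIntegrable
    rw [hFb, hftc]; ring
  have h1mem : (1:ℝ) ∈ Set.Ioi (0:ℝ) := by norm_num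
  -- limit at infinity
  have hFlim : Tendsto F atTop (𝓝 (∫ t in Set.Ioi (0:ℝ), h t)) :=
    intervalIntegral_tendsto_integral_Ioi 0 Hhtil.integrableOn tendsto_id
  have htop : Tendsto (fun r => (f r) ^ 2) atTop
      (𝓝 ((f 1) ^ 2 + ((∫ t in Set.Ioi (0:ℝ), h t) - F 1))) := by
    refine Tendsto.congr' ?_ (tendsto_const_nhds.add (hFlim.sub tendsto_const_nhds))
    filter_upwards [eventually_gt_atTop 0] with b hb
    exact (key 1 h1mem b hb).symm
  -- limit at zero
  have hFc : Tendsto F (nhdsWithin 0 (Set.Ioi 0)) (𝓝 (F 0)) :=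
    (hF.tendsto 0).mono_left nhdsWithin_le_nhds
  have hbot : Tendsto (fun r => (f r) ^ 2) (nhdsWithin 0 (Set.Ioi 0))
      (𝓝 ((f 1) ^ 2 - F 1 + F 0)) := by
    refine Tendsto.congr' ?_ (tendsto_const_nhds.add hFc)
    filter_upwards [self_mem_nhdsWithin] with a ha
    have := key a ha 1 h1mem
    linarith
  have hgnn : ∀ r, 0 ≤ (f r) ^ 2 := fun r => sq_nonneg _
  have htopL : (f 1) ^ 2 + ((∫ t in Set.Ioi (0:ℝ), h t) - F 1) = 0 :=
    limit_zero_top hgnn Hsq' htop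
  have hbotL : (f 1) ^ 2 - F 1 + F 0 = 0 :=
    limit_zero_bot hgnn Hsq' hbot
  rw [hbotL] at hbot
  rw [htopL] at htop
  exact ⟨hcont, hbot, htop⟩

end
end

section
/- Comparison of soliton distances: for m = 1 and parameters (α,λ), (α̃,λ̃) with small |α−α̃| + |log(λ/λ̃)|, one has ‖Q_{α,λ} − Q_{α̃,λ̃}‖_{Ḣ¹(ℝ²)} ≈ (|α−α̃| + |log(λ/λ̃)|)/(1 + |α−α̃| + |log(λ/λ̃)|), with implicit constants independent of the parameters. -/
open Real

noncomputable section

/-- `h₁(r) = 2r/(1+r²)`. -/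
def hh1 (r : ℝ) : ℝ := 2 * r / (1 + r ^ 2)

/-- `h₃(r) = (r²−1)/(r²+1)`. -/
def hh3 (r : ℝ) : ℝ := (r ^ 2 - 1) / (r ^ 2 + 1)

/-- The square of the `Ḣ¹(ℝ²)` distance between the equivariant solitons `Q_{α,λ}` and
`Q_{α',λ'}`, computed in the equivariant reduction: for a `1`-equivariant difference
`d(r,θ) = e^{θR} d̄(r)` one has `‖d‖²_{Ḣ¹} = 2π ∫ (|∂_r d̄|² + (d̄₁²+d̄₂²)/r²) r dr`,
where `Q̄_{α,λ}(r) = (h₁(λr)cos α, h₁(λr)sin α, h₃(λr))`. -/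
def solitonDistSq (α lam α' lam' : ℝ) : ℝ :=
  2 * π * ∫ r in Set.Ioi (0 : ℝ),
    ((deriv (fun s => hh1 (lam * s) * cos α - hh1 (lam' * s) * cos α') r) ^ 2
      + (deriv (fun s => hh1 (lam * s) * sin α - hh1 (lam' * s) * sin α') r) ^ 2
      + (deriv (fun s => hh3 (lam * s) - hh3 (lam' * s)) r) ^ 2
      + ((hh1 (lam * r) * cos α - hh1 (lam' * r) * cos α') ^ 2
          + (hh1 (lam * r) * sin α - hh1 (lam' * r) * sin α') ^ 2) / r ^ 2) * r

open MeasureTheory Set Filter Topology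


lemma one_add_sq_pos (x : ℝ) : (0:ℝ) < 1 + x ^ 2 := by positivity
lemma one_add_sq_ne (x : ℝ) : (1:ℝ) + x ^ 2 ≠ 0 := (one_add_sq_pos x).ne'

lemma hasDerivAt_hh1 (x : ℝ) : HasDerivAt hh1 (2*(1-x^2)/(1+x^2)^2) x := by
  have h1 : HasDerivAt (fun y : ℝ => 2*y) 2 x := by simpa using (hasDerivAt_id x).const_mul (2:ℝ)
  have h2 : HasDerivAt (fun y : ℝ => 1 + y^2) (2*x) x := by
    simpa using (hasDerivAt_pow 2 x).const_add 1
  have := h1.div h2 (one_add_sq_ne x)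
  refine this.congr_deriv ?_
  field_simp
  ring

lemma hasDerivAt_hh3 (x : ℝ) : HasDerivAt hh3 (4*x/(1+x^2)^2) x := by
  have h1 : HasDerivAt (fun y : ℝ => y^2 - 1) (2*x) x := by
    simpa using (hasDerivAt_pow 2 x).sub_const 1
  have h2 : HasDerivAt (fun y : ℝ => y^2 + 1) (2*x) x := by
    simpa using (hasDerivAt_pow 2 x).add_const 1
  have hne : x^2 + 1 ≠ 0 := by positivity
  have := h1.div h2 hne
  refine this.congr_deriv ?_
  field_simp
  ring

lemma hasDerivAt_hh1_scaled (p r : ℝ) :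
    HasDerivAt (fun s => hh1 (p*s)) (p*(2*(1-(p*r)^2)/(1+(p*r)^2)^2)) r := by
  exact ((hasDerivAt_hh1 (p*r)).comp r ((hasDerivAt_id r).const_mul p)).congr_deriv (by ring)

lemma hasDerivAt_hh3_scaled (p r : ℝ) :
    HasDerivAt (fun s => hh3 (p*s)) (p*(4*(p*r)/(1+(p*r)^2)^2)) r := by
  exact ((hasDerivAt_hh3 (p*r)).comp r ((hasDerivAt_id r).const_mul p)).congr_deriv (by ring)

lemma deriv_comb1 (p q u v r : ℝ) :
    deriv (fun s => hh1 (p*s)*u - hh1 (q*s)*v) r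
      = p*(2*(1-(p*r)^2)/(1+(p*r)^2)^2)*u - q*(2*(1-(q*r)^2)/(1+(q*r)^2)^2)*v :=
  (((hasDerivAt_hh1_scaled p r).mul_const u).sub ((hasDerivAt_hh1_scaled q r).mul_const v)).deriv

lemma deriv_comb3 (p q r : ℝ) :
    deriv (fun s => hh3 (p*s) - hh3 (q*s)) r
      = p*(4*(p*r)/(1+(p*r)^2)^2) - q*(4*(q*r)/(1+(q*r)^2)^2) :=
  ((hasDerivAt_hh3_scaled p r).sub (hasDerivAt_hh3_scaled q r)).deriv


def Acore (p r : ℝ) : ℝ :=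
  (-8/3)*((1+p^2*r^2)^3)⁻¹ + 4*((1+p^2*r^2)^2)⁻¹ - 2*(1+p^2*r^2)⁻¹
def Bcore (p r : ℝ) : ℝ := (8/3)*((1+p^2*r^2)^3)⁻¹ - 4*((1+p^2*r^2)^2)⁻¹
def Ccore (p q r : ℝ) : ℝ :=
  2*(p^2+q^2)*((1+p^2*r^2)⁻¹+(1+q^2*r^2)⁻¹)/(q^2-p^2)^2
    + (p^4+6*p^2*q^2+q^4)*(Real.log (1+q^2*r^2) - Real.log (1+p^2*r^2))/(q^2-p^2)^3
def C3core (p q r : ℝ) : ℝ :=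
  ((1+p^2*r^2)⁻¹+(1+q^2*r^2)⁻¹)/(q^2-p^2)^2
    + (p^2+q^2)*(Real.log (1+q^2*r^2) - Real.log (1+p^2*r^2))/(q^2-p^2)^3
def C4core (p q r : ℝ) : ℝ := (Real.log (1+q^2*r^2) - Real.log (1+p^2*r^2))/(q^2-p^2)

lemma Pden_pos (p r : ℝ) : (0:ℝ) < 1+p^2*r^2 := by positivity
lemma Pden_ne (p r : ℝ) : (1:ℝ)+p^2*r^2 ≠ 0 := (Pden_pos p r).ne'

lemma hasDerivAt_P (p r : ℝ) : HasDerivAt (fun r : ℝ => 1+p^2*r^2) (2*p^2*r) r := by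
  have := ((hasDerivAt_pow 2 r).const_mul (p^2)).const_add 1
  refine this.congr_deriv ?_
  ring

lemma hasDerivAt_Pinv (p r : ℝ) :
    HasDerivAt (fun r : ℝ => (1+p^2*r^2)⁻¹) (-(2*p^2*r)/(1+p^2*r^2)^2) r :=
  (hasDerivAt_P p r).inv (Pden_ne p r)

lemma hasDerivAt_Pinv2 (p r : ℝ) :
    HasDerivAt (fun r : ℝ => ((1+p^2*r^2)^2)⁻¹) (-(2*(1+p^2*r^2)*(2*p^2*r))/(1+p^2*r^2)^4) r := by
  have := ((hasDerivAt_P p r).pow 2).inv (pow_ne_zero 2 (Pden_ne p r))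
  refine this.congr_deriv ?_
  simp only [Pi.pow_apply]
  ring

lemma hasDerivAt_Pinv3 (p r : ℝ) :
    HasDerivAt (fun r : ℝ => ((1+p^2*r^2)^3)⁻¹) (-(3*(1+p^2*r^2)^2*(2*p^2*r))/(1+p^2*r^2)^6) r := by
  have := ((hasDerivAt_P p r).pow 3).inv (pow_ne_zero 3 (Pden_ne p r))
  refine this.congr_deriv ?_
  simp only [Pi.pow_apply]
  ring

lemma hasDerivAt_logP (p r : ℝ) :
    HasDerivAt (fun r : ℝ => Real.log (1+p^2*r^2)) (2*p^2*r/(1+p^2*r^2)) r :=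
  (hasDerivAt_P p r).log (Pden_ne p r)

lemma hasDerivAt_Acore (p r : ℝ) :
    HasDerivAt (fun r => Acore p r) ((p*(2*(1-(p*r)^2)/(1+(p*r)^2)^2))^2*r) r := by
  have h := (((hasDerivAt_Pinv3 p r).const_mul (-8/3)).add
      ((hasDerivAt_Pinv2 p r).const_mul 4)).sub ((hasDerivAt_Pinv p r).const_mul 2)
  refine h.congr_deriv ?_
  have h1 : (1:ℝ)+p^2*r^2 ≠ 0 := Pden_ne p r
  have h2 : (1:ℝ)+(p*r)^2 ≠ 0 := by positivity
  field_simp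
  ring

lemma hasDerivAt_Bcore (p r : ℝ) :
    HasDerivAt (fun r => Bcore p r) ((p*(4*(p*r)/(1+(p*r)^2)^2))^2*r) r := by
  have h := ((hasDerivAt_Pinv3 p r).const_mul (8/3)).sub ((hasDerivAt_Pinv2 p r).const_mul 4)
  refine h.congr_deriv ?_
  have h1 : (1:ℝ)+p^2*r^2 ≠ 0 := Pden_ne p r
  have h2 : (1:ℝ)+(p*r)^2 ≠ 0 := by positivity
  field_simp
  ring

lemma hasDerivAt_Ccore (p q r : ℝ) (hk : q^2-p^2 ≠ 0) :
    HasDerivAt (fun r => Ccore p q r)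
      (-((2*(1-(p*r)^2)/(1+(p*r)^2)^2)*(2*(1-(q*r)^2)/(1+(q*r)^2)^2)*r)/2) r := by
  have h := (((hasDerivAt_Pinv p r).add (hasDerivAt_Pinv q r)).const_mul
      (2*(p^2+q^2))).div_const ((q^2-p^2)^2) |>.add
      ((((hasDerivAt_logP q r).sub (hasDerivAt_logP p r)).const_mul
      (p^4+6*p^2*q^2+q^4)).div_const ((q^2-p^2)^3))
  refine h.congr_deriv ?_
  have h1 : (1:ℝ)+p^2*r^2 ≠ 0 := Pden_ne p r
  have h1' : (1:ℝ)+q^2*r^2 ≠ 0 := Pden_ne q r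
  have h2 : (1:ℝ)+(p*r)^2 ≠ 0 := by positivity
  have h2' : (1:ℝ)+(q*r)^2 ≠ 0 := by positivity
  field_simp
  ring

lemma hasDerivAt_C3core (p q r : ℝ) (hk : q^2-p^2 ≠ 0) :
    HasDerivAt (fun r => C3core p q r)
      (2*r^3*((1+p^2*r^2)^2)⁻¹*((1+q^2*r^2)^2)⁻¹) r := by
  have h := (((hasDerivAt_Pinv p r).add (hasDerivAt_Pinv q r)).div_const
      ((q^2-p^2)^2)).add
      ((((hasDerivAt_logP q r).sub (hasDerivAt_logP p r)).const_mul
      (p^2+q^2)).div_const ((q^2-p^2)^3))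
  refine h.congr_deriv ?_
  have h1 : (1:ℝ)+p^2*r^2 ≠ 0 := Pden_ne p r
  have h1' : (1:ℝ)+q^2*r^2 ≠ 0 := Pden_ne q r
  field_simp
  ring

lemma hasDerivAt_C4core (p q r : ℝ) (hk : q^2-p^2 ≠ 0) :
    HasDerivAt (fun r => C4core p q r) (2*r*(1+p^2*r^2)⁻¹*(1+q^2*r^2)⁻¹) r := by
  have h := ((hasDerivAt_logP q r).sub (hasDerivAt_logP p r)).div_const (q^2-p^2)
  refine h.congr_deriv ?_
  have h1 : (1:ℝ)+p^2*r^2 ≠ 0 := Pden_ne p r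
  have h1' : (1:ℝ)+q^2*r^2 ≠ 0 := Pden_ne q r
  field_simp
  ring

lemma tendsto_P_atTop (p : ℝ) (hp : p ≠ 0) :
    Tendsto (fun r : ℝ => 1+p^2*r^2) atTop atTop := by
  apply tendsto_atTop_add_const_left
  exact (tendsto_pow_atTop (two_ne_zero)).const_mul_atTop (by positivity)

lemma tendsto_Pinv (p : ℝ) (hp : p ≠ 0) :
    Tendsto (fun r : ℝ => (1+p^2*r^2)⁻¹) atTop (𝓝 0) :=
  (tendsto_P_atTop p hp).inv_tendsto_atTop

lemma tendsto_Pinv_pow (p : ℝ) (hp : p ≠ 0) (n : ℕ) (hn : n ≠ 0) :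
    Tendsto (fun r : ℝ => ((1+p^2*r^2)^n)⁻¹) atTop (𝓝 0) := by
  have h := (tendsto_Pinv p hp).pow n
  rw [zero_pow hn] at h
  simpa [inv_pow] using h

lemma tendsto_logdiff (p q : ℝ) (hp : 0 < p) (hq : 0 < q) :
    Tendsto (fun r : ℝ => Real.log (1+q^2*r^2) - Real.log (1+p^2*r^2)) atTop
      (𝓝 (2*(Real.log q - Real.log p))) := by
  have key : Tendsto (fun r : ℝ => Real.log ((r:ℝ)⁻¹^2+q^2) - Real.log ((r:ℝ)⁻¹^2+p^2))
      atTop (𝓝 (2*(Real.log q - Real.log p))) := by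
    have hq2 : Tendsto (fun r : ℝ => (r:ℝ)⁻¹^2+q^2) atTop (𝓝 (q^2)) := by
      have := (tendsto_inv_atTop_zero (𝕜 := ℝ)).pow 2
      simpa using this.add_const (q^2)
    have hp2 : Tendsto (fun r : ℝ => (r:ℝ)⁻¹^2+p^2) atTop (𝓝 (p^2)) := by
      have := (tendsto_inv_atTop_zero (𝕜 := ℝ)).pow 2
      simpa using this.add_const (p^2)
    have hlq := (Real.continuousAt_log (by positivity : (q:ℝ)^2 ≠ 0)).tendsto.comp hq2
    have hlp := (Real.continuousAt_log (by positivity : (p:ℝ)^2 ≠ 0)).tendsto.comp hp2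
    have := hlq.sub hlp
    have hlog : Real.log (q^2) - Real.log (p^2) = 2*(Real.log q - Real.log p) := by
      rw [Real.log_pow, Real.log_pow]; push_cast; ring
    rw [hlog] at this
    exact this
  apply key.congr'
  filter_upwards [eventually_gt_atTop (0:ℝ)] with r hr
  have hr2 : (r:ℝ)^2 ≠ 0 := by positivity
  have e : ∀ c : ℝ, 0 < c → Real.log (r⁻¹^2+c^2) = Real.log (1+c^2*r^2) - Real.log (r^2) := by
    intro c hc
    have : (1+c^2*r^2)/(r^2) = r⁻¹^2+c^2 := by field_simp
    rw [← this, Real.log_div (by positivity) hr2]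
  rw [e p hp, e q hq]
  ring

lemma tendsto_Acore (p : ℝ) (hp : p ≠ 0) : Tendsto (fun r => Acore p r) atTop (𝓝 0) := by
  have h := (((tendsto_Pinv_pow p hp 3 (by norm_num)).const_mul ((-8:ℝ)/3)).add
    ((tendsto_Pinv_pow p hp 2 (by norm_num)).const_mul (4:ℝ))).sub
    ((tendsto_Pinv p hp).const_mul (2:ℝ))
  simpa [Acore] using h

lemma tendsto_Bcore (p : ℝ) (hp : p ≠ 0) : Tendsto (fun r => Bcore p r) atTop (𝓝 0) := by
  have h := ((tendsto_Pinv_pow p hp 3 (by norm_num)).const_mul ((8:ℝ)/3)).sub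
    ((tendsto_Pinv_pow p hp 2 (by norm_num)).const_mul (4:ℝ))
  simpa [Bcore] using h

lemma tendsto_Ccore (p q : ℝ) (hp : 0 < p) (hq : 0 < q) :
    Tendsto (fun r => Ccore p q r) atTop
      (𝓝 ((p^4+6*p^2*q^2+q^4)*(2*(Real.log q - Real.log p))/(q^2-p^2)^3)) := by
  have h := ((((tendsto_Pinv p hp.ne').add (tendsto_Pinv q hq.ne')).const_mul
      (2*(p^2+q^2))).div_const ((q^2-p^2)^2)).add
    (((tendsto_logdiff p q hp hq).const_mul (p^4+6*p^2*q^2+q^4)).div_const ((q^2-p^2)^3))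
  have e : (p^4+6*p^2*q^2+q^4)*(2*(Real.log q - Real.log p))/(q^2-p^2)^3
      = 2*(p^2+q^2)*((0:ℝ)+0)/(q^2-p^2)^2 + (p^4+6*p^2*q^2+q^4)*(2*(Real.log q - Real.log p))/(q^2-p^2)^3 := by
    ring
  rw [e]
  exact h

lemma tendsto_C3core (p q : ℝ) (hp : 0 < p) (hq : 0 < q) :
    Tendsto (fun r => C3core p q r) atTop
      (𝓝 ((p^2+q^2)*(2*(Real.log q - Real.log p))/(q^2-p^2)^3)) := by
  have h := (((tendsto_Pinv p hp.ne').add (tendsto_Pinv q hq.ne')).div_const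
      ((q^2-p^2)^2)).add
    (((tendsto_logdiff p q hp hq).const_mul (p^2+q^2)).div_const ((q^2-p^2)^3))
  have e : (p^2+q^2)*(2*(Real.log q - Real.log p))/(q^2-p^2)^3
      = ((0:ℝ)+0)/(q^2-p^2)^2 + (p^2+q^2)*(2*(Real.log q - Real.log p))/(q^2-p^2)^3 := by
    ring
  rw [e]
  exact h

lemma tendsto_C4core (p q : ℝ) (hp : 0 < p) (hq : 0 < q) :
    Tendsto (fun r => C4core p q r) atTop (𝓝 ((2*(Real.log q - Real.log p))/(q^2-p^2))) :=
  (tendsto_logdiff p q hp hq).div_const (q^2-p^2)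

lemma intT1 (p q u v : ℝ) (hp : 0 < p) (hq : 0 < q) (hk : q^2 - p^2 ≠ 0) :
    IntegrableOn (fun r => (p*(2*(1-(p*r)^2)/(1+(p*r)^2)^2)*u
        - q*(2*(1-(q*r)^2)/(1+(q*r)^2)^2)*v)^2*r) (Ioi 0)
    ∧ ∫ r in Ioi (0:ℝ), (p*(2*(1-(p*r)^2)/(1+(p*r)^2)^2)*u
        - q*(2*(1-(q*r)^2)/(1+(q*r)^2)^2)*v)^2*r
      = 8*u*v*p*q*(p^4+6*p^2*q^2+q^4)*(Real.log q - Real.log p)/(q^2-p^2)^3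
        + (2/3)*(u^2+v^2) - 16*u*v*p*q*(p^2+q^2)/(q^2-p^2)^2 := by
  set T : ℝ → ℝ := fun r => (p*(2*(1-(p*r)^2)/(1+(p*r)^2)^2)*u
      - q*(2*(1-(q*r)^2)/(1+(q*r)^2)^2)*v)^2*r with hT
  set G : ℝ → ℝ := fun r => u^2*Acore p r + (v^2*Acore q r + (4*u*v*p*q)*Ccore p q r) with hGdef
  have hd : ∀ r : ℝ, HasDerivAt G (T r) r := by
    intro r
    have h := ((hasDerivAt_Acore p r).const_mul (u^2)).add
      (((hasDerivAt_Acore q r).const_mul (v^2)).add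
        ((hasDerivAt_Ccore p q r hk).const_mul (4*u*v*p*q)))
    refine h.congr_deriv ?_
    simp only [hT]
    ring
  have hderiv : ∀ r ∈ Ioi (0:ℝ), HasDerivAt G (T r) r := fun r _ => hd r
  have hcont : ContinuousWithinAt G (Ici 0) 0 :=
    (hd 0).continuousAt.continuousWithinAt
  have hnonneg : ∀ r ∈ Ioi (0:ℝ), 0 ≤ T r := by
    intro r hr
    exact mul_nonneg (sq_nonneg _) (le_of_lt hr)
  have hlim : Tendsto G atTop (𝓝 ((4*u*v*p*q)*((p^4+6*p^2*q^2+q^4)*(2*(Real.log q - Real.log p))/(q^2-p^2)^3))) := by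
    have h := ((tendsto_Acore p hp.ne').const_mul (u^2)).add
      (((tendsto_Acore q hq.ne').const_mul (v^2)).add
        ((tendsto_Ccore p q hp hq).const_mul (4*u*v*p*q)))
    have e : (4*u*v*p*q)*((p^4+6*p^2*q^2+q^4)*(2*(Real.log q - Real.log p))/(q^2-p^2)^3)
        = u^2*0 + (v^2*0 + (4*u*v*p*q)*((p^4+6*p^2*q^2+q^4)*(2*(Real.log q - Real.log p))/(q^2-p^2)^3)) := by ring
    rw [e]
    exact h
  refine ⟨integrableOn_Ioi_deriv_of_nonneg hcont hderiv hnonneg hlim, ?_⟩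
  rw [integral_Ioi_of_hasDerivAt_of_nonneg hcont hderiv hnonneg hlim]
  have hG0 : G 0 = u^2*(-2/3) + (v^2*(-2/3) + (4*u*v*p*q)*(2*(p^2+q^2)*(1+1)/(q^2-p^2)^2)) := by
    simp [hGdef, Acore, Ccore]
    norm_num
  rw [hG0]
  field_simp
  ring

lemma intT3 (p q : ℝ) (hp : 0 < p) (hq : 0 < q) (hk : q^2 - p^2 ≠ 0) :
    IntegrableOn (fun r => (p*(4*(p*r)/(1+(p*r)^2)^2) - q*(4*(q*r)/(1+(q*r)^2)^2))^2*r) (Ioi 0)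
    ∧ ∫ r in Ioi (0:ℝ), (p*(4*(p*r)/(1+(p*r)^2)^2) - q*(4*(q*r)/(1+(q*r)^2)^2))^2*r
      = 8/3 + 32*p^2*q^2/(q^2-p^2)^2
        - 32*p^2*q^2*(p^2+q^2)*(Real.log q - Real.log p)/(q^2-p^2)^3 := by
  set T : ℝ → ℝ := fun r => (p*(4*(p*r)/(1+(p*r)^2)^2) - q*(4*(q*r)/(1+(q*r)^2)^2))^2*r with hT
  set G : ℝ → ℝ := fun r => Bcore p r + (Bcore q r + (-16*p^2*q^2)*C3core p q r) with hGdef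
  have hd : ∀ r : ℝ, HasDerivAt G (T r) r := by
    intro r
    have h := (hasDerivAt_Bcore p r).add
      ((hasDerivAt_Bcore q r).add ((hasDerivAt_C3core p q r hk).const_mul (-16*p^2*q^2)))
    refine h.congr_deriv ?_
    simp only [hT]
    ring
  have hderiv : ∀ r ∈ Ioi (0:ℝ), HasDerivAt G (T r) r := fun r _ => hd r
  have hcont : ContinuousWithinAt G (Ici 0) 0 := (hd 0).continuousAt.continuousWithinAt
  have hnonneg : ∀ r ∈ Ioi (0:ℝ), 0 ≤ T r := fun r hr => mul_nonneg (sq_nonneg _) (le_of_lt hr)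
  have hlim : Tendsto G atTop
      (𝓝 ((-16*p^2*q^2)*((p^2+q^2)*(2*(Real.log q - Real.log p))/(q^2-p^2)^3))) := by
    have h := (tendsto_Bcore p hp.ne').add
      ((tendsto_Bcore q hq.ne').add ((tendsto_C3core p q hp hq).const_mul (-16*p^2*q^2)))
    have e : (-16*p^2*q^2)*((p^2+q^2)*(2*(Real.log q - Real.log p))/(q^2-p^2)^3)
        = 0 + ((0:ℝ) + (-16*p^2*q^2)*((p^2+q^2)*(2*(Real.log q - Real.log p))/(q^2-p^2)^3)) := by
      ring
    rw [e]
    exact h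
  refine ⟨integrableOn_Ioi_deriv_of_nonneg hcont hderiv hnonneg hlim, ?_⟩
  rw [integral_Ioi_of_hasDerivAt_of_nonneg hcont hderiv hnonneg hlim]
  have hG0 : G 0 = -4/3 + (-4/3 + (-16*p^2*q^2)*((1+1)/(q^2-p^2)^2)) := by
    simp [hGdef, Bcore, C3core]
    norm_num
  rw [hG0]
  field_simp
  ring

lemma intT4 (p q u v u' v' : ℝ) (hp : 0 < p) (hq : 0 < q) (hk : q^2 - p^2 ≠ 0) :
    IntegrableOn (fun r => ((hh1 (p*r)*u - hh1 (q*r)*v)^2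
        + (hh1 (p*r)*u' - hh1 (q*r)*v')^2)/r^2*r) (Ioi 0)
    ∧ ∫ r in Ioi (0:ℝ), ((hh1 (p*r)*u - hh1 (q*r)*v)^2
        + (hh1 (p*r)*u' - hh1 (q*r)*v')^2)/r^2*r
      = 2*(u^2+u'^2) + 2*(v^2+v'^2)
        - 8*(u*v+u'*v')*p*q*(Real.log q - Real.log p)/(q^2-p^2) := by
  set T : ℝ → ℝ := fun r => ((hh1 (p*r)*u - hh1 (q*r)*v)^2
      + (hh1 (p*r)*u' - hh1 (q*r)*v')^2)/r^2*r with hT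
  set G : ℝ → ℝ := fun r => (u^2+u'^2)*(-2*(1+p^2*r^2)⁻¹)
      + ((v^2+v'^2)*(-2*(1+q^2*r^2)⁻¹) + (-4*(u*v+u'*v')*p*q)*C4core p q r) with hGdef
  have hdgen : ∀ r : ℝ, HasDerivAt G
      ((u^2+u'^2)*(-2*(-(2*p^2*r)/(1+p^2*r^2)^2))
        + ((v^2+v'^2)*(-2*(-(2*q^2*r)/(1+q^2*r^2)^2))
          + (-4*(u*v+u'*v')*p*q)*(2*r*(1+p^2*r^2)⁻¹*(1+q^2*r^2)⁻¹))) r := by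
    intro r
    exact (((hasDerivAt_Pinv p r).const_mul (-2:ℝ)).const_mul (u^2+u'^2)).add
      ((((hasDerivAt_Pinv q r).const_mul (-2:ℝ)).const_mul (v^2+v'^2)).add
        ((hasDerivAt_C4core p q r hk).const_mul (-4*(u*v+u'*v')*p*q)))
  have hderiv : ∀ r ∈ Ioi (0:ℝ), HasDerivAt G (T r) r := by
    intro r hr
    have hr0 : (r:ℝ) ≠ 0 := ne_of_gt hr
    convert hdgen r using 1
    simp only [hT, hh1]
    have h1 : (1:ℝ)+p^2*r^2 ≠ 0 := Pden_ne p r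
    have h1' : (1:ℝ)+q^2*r^2 ≠ 0 := Pden_ne q r
    have h2 : (1:ℝ)+(p*r)^2 ≠ 0 := by positivity
    have h2' : (1:ℝ)+(q*r)^2 ≠ 0 := by positivity
    field_simp
    ring
  have hcont : ContinuousWithinAt G (Ici 0) 0 := (hdgen 0).continuousAt.continuousWithinAt
  have hnonneg : ∀ r ∈ Ioi (0:ℝ), 0 ≤ T r := by
    intro r hr
    exact mul_nonneg (div_nonneg (by positivity) (by positivity)) (le_of_lt hr)
  have hlim : Tendsto G atTop
      (𝓝 ((-4*(u*v+u'*v')*p*q)*((2*(Real.log q - Real.log p))/(q^2-p^2)))) := by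
    have h := (((tendsto_Pinv p hp.ne').const_mul (-2:ℝ)).const_mul (u^2+u'^2)).add
      ((((tendsto_Pinv q hq.ne').const_mul (-2:ℝ)).const_mul (v^2+v'^2)).add
        ((tendsto_C4core p q hp hq).const_mul (-4*(u*v+u'*v')*p*q)))
    have e : (-4*(u*v+u'*v')*p*q)*((2*(Real.log q - Real.log p))/(q^2-p^2))
        = (u^2+u'^2)*(-2*0) + ((v^2+v'^2)*(-2*0)
          + (-4*(u*v+u'*v')*p*q)*((2*(Real.log q - Real.log p))/(q^2-p^2))) := by
      ring
    rw [e]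
    exact h
  refine ⟨integrableOn_Ioi_deriv_of_nonneg hcont hderiv hnonneg hlim, ?_⟩
  rw [integral_Ioi_of_hasDerivAt_of_nonneg hcont hderiv hnonneg hlim]
  have hG0 : G 0 = (u^2+u'^2)*(-2) + ((v^2+v'^2)*(-2) + 0) := by
    simp [hGdef, C4core]
  rw [hG0]
  field_simp
  ring

lemma intT1eq (p u v : ℝ) (hp : 0 < p) :
    IntegrableOn (fun r => (p*(2*(1-(p*r)^2)/(1+(p*r)^2)^2)*u
        - p*(2*(1-(p*r)^2)/(1+(p*r)^2)^2)*v)^2*r) (Ioi 0)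
    ∧ ∫ r in Ioi (0:ℝ), (p*(2*(1-(p*r)^2)/(1+(p*r)^2)^2)*u
        - p*(2*(1-(p*r)^2)/(1+(p*r)^2)^2)*v)^2*r = (2/3)*(u-v)^2 := by
  set T : ℝ → ℝ := fun r => (p*(2*(1-(p*r)^2)/(1+(p*r)^2)^2)*u
      - p*(2*(1-(p*r)^2)/(1+(p*r)^2)^2)*v)^2*r with hT
  set G : ℝ → ℝ := fun r => (u-v)^2*Acore p r with hGdef
  have hd : ∀ r : ℝ, HasDerivAt G (T r) r := by
    intro r
    have h := (hasDerivAt_Acore p r).const_mul ((u-v)^2)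
    refine h.congr_deriv ?_
    simp only [hT]
    ring
  have hderiv : ∀ r ∈ Ioi (0:ℝ), HasDerivAt G (T r) r := fun r _ => hd r
  have hcont : ContinuousWithinAt G (Ici 0) 0 := (hd 0).continuousAt.continuousWithinAt
  have hnonneg : ∀ r ∈ Ioi (0:ℝ), 0 ≤ T r := fun r hr => mul_nonneg (sq_nonneg _) (le_of_lt hr)
  have hlim : Tendsto G atTop (𝓝 ((u-v)^2*0)) := (tendsto_Acore p hp.ne').const_mul ((u-v)^2)
  refine ⟨integrableOn_Ioi_deriv_of_nonneg hcont hderiv hnonneg hlim, ?_⟩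
  rw [integral_Ioi_of_hasDerivAt_of_nonneg hcont hderiv hnonneg hlim]
  have hG0 : G 0 = (u-v)^2*(-2/3) := by
    simp [hGdef, Acore]
    norm_num
  rw [hG0]
  ring

lemma intT4eq (p u v u' v' : ℝ) (hp : 0 < p) :
    IntegrableOn (fun r => ((hh1 (p*r)*u - hh1 (p*r)*v)^2
        + (hh1 (p*r)*u' - hh1 (p*r)*v')^2)/r^2*r) (Ioi 0)
    ∧ ∫ r in Ioi (0:ℝ), ((hh1 (p*r)*u - hh1 (p*r)*v)^2
        + (hh1 (p*r)*u' - hh1 (p*r)*v')^2)/r^2*r = 2*((u-v)^2+(u'-v')^2) := by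
  set T : ℝ → ℝ := fun r => ((hh1 (p*r)*u - hh1 (p*r)*v)^2
      + (hh1 (p*r)*u' - hh1 (p*r)*v')^2)/r^2*r with hT
  set G : ℝ → ℝ := fun r => ((u-v)^2+(u'-v')^2)*(-2*(1+p^2*r^2)⁻¹) with hGdef
  have hdgen : ∀ r : ℝ, HasDerivAt G
      (((u-v)^2+(u'-v')^2)*(-2*(-(2*p^2*r)/(1+p^2*r^2)^2))) r := by
    intro r
    exact ((hasDerivAt_Pinv p r).const_mul (-2:ℝ)).const_mul ((u-v)^2+(u'-v')^2)
  have hderiv : ∀ r ∈ Ioi (0:ℝ), HasDerivAt G (T r) r := by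
    intro r hr
    have hr0 : (r:ℝ) ≠ 0 := ne_of_gt hr
    convert hdgen r using 1
    simp only [hT, hh1]
    have h1 : (1:ℝ)+p^2*r^2 ≠ 0 := Pden_ne p r
    have h2 : (1:ℝ)+(p*r)^2 ≠ 0 := by positivity
    field_simp
  have hcont : ContinuousWithinAt G (Ici 0) 0 := (hdgen 0).continuousAt.continuousWithinAt
  have hnonneg : ∀ r ∈ Ioi (0:ℝ), 0 ≤ T r := by
    intro r hr
    exact mul_nonneg (div_nonneg (by positivity) (by positivity)) (le_of_lt hr)
  have hlim : Tendsto G atTop (𝓝 (((u-v)^2+(u'-v')^2)*(-2*0))) :=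
    ((tendsto_Pinv p hp.ne').const_mul (-2:ℝ)).const_mul ((u-v)^2+(u'-v')^2)
  refine ⟨integrableOn_Ioi_deriv_of_nonneg hcont hderiv hnonneg hlim, ?_⟩
  rw [integral_Ioi_of_hasDerivAt_of_nonneg hcont hderiv hnonneg hlim]
  have hG0 : G 0 = ((u-v)^2+(u'-v')^2)*(-2) := by
    simp [hGdef]
  rw [hG0]
  ring

def hfun (x : ℝ) : ℝ :=
  if x = 0 then 2/3 else (Real.sinh x * Real.cosh x - x)/(Real.sinh x)^3

lemma solitonDistSq_eq (α p α' q : ℝ) (hp : 0 < p) (hq : 0 < q) :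
    solitonDistSq α p α' q = 16*π*(hfun (Real.log p - Real.log q)
      * ((1 - Real.cos (α - α')) + Real.sinh (Real.log p - Real.log q)^2
          /(Real.cosh (Real.log p - Real.log q)+1))) := by
  rcases eq_or_ne p q with rfl | hne
  · -- equal parameters case
    have A := intT1eq p (Real.cos α) (Real.cos α') hp
    have B := intT1eq p (Real.sin α) (Real.sin α') hp
    have D := intT4eq p (Real.cos α) (Real.cos α') (Real.sin α) (Real.sin α') hp
    have step1 : solitonDistSq α p α' p = 2*π*((∫ r in Ioi (0:ℝ),
        (p*(2*(1-(p*r)^2)/(1+(p*r)^2)^2)*Real.cos α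
          - p*(2*(1-(p*r)^2)/(1+(p*r)^2)^2)*Real.cos α')^2*r)
      + ((∫ r in Ioi (0:ℝ), (p*(2*(1-(p*r)^2)/(1+(p*r)^2)^2)*Real.sin α
          - p*(2*(1-(p*r)^2)/(1+(p*r)^2)^2)*Real.sin α')^2*r)
      + (∫ r in Ioi (0:ℝ), ((hh1 (p*r)*Real.cos α - hh1 (p*r)*Real.cos α')^2
          + (hh1 (p*r)*Real.sin α - hh1 (p*r)*Real.sin α')^2)/r^2*r))) := by
      have I34 : IntegrableOn (fun r => (p*(2*(1-(p*r)^2)/(1+(p*r)^2)^2)*Real.sin α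
          - p*(2*(1-(p*r)^2)/(1+(p*r)^2)^2)*Real.sin α')^2*r
          + ((hh1 (p*r)*Real.cos α - hh1 (p*r)*Real.cos α')^2
          + (hh1 (p*r)*Real.sin α - hh1 (p*r)*Real.sin α')^2)/r^2*r) (Ioi 0) := B.1.add D.1
      unfold solitonDistSq
      simp only [deriv_comb1, deriv_comb3]
      rw [← integral_add B.1 D.1, ← integral_add A.1 I34]
      congr 1
      apply setIntegral_congr_fun measurableSet_Ioi
      intro r hr
      show _ = _
      ring
    rw [step1, A.2, B.2, D.2]
    rw [sub_self]
    have hcc : (Real.cos α - Real.cos α')^2 + (Real.sin α - Real.sin α')^2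
        = 2 - 2*Real.cos (α - α') := by
      rw [Real.cos_sub]
      nlinarith [Real.sin_sq_add_cos_sq α, Real.sin_sq_add_cos_sq α']
    simp only [hfun, if_pos rfl, Real.sinh_zero, Real.cosh_zero]
    norm_num
    linear_combination (16*π/3) * hcc
  · -- distinct parameters case
    have hk : q^2 - p^2 ≠ 0 := by
      intro h
      apply hne
      have h2 : (q-p)*(q+p) = 0 := by linear_combination h
      rcases mul_eq_zero.1 h2 with h3 | h3
      · linarith
      · linarith
    have A := intT1 p q (Real.cos α) (Real.cos α') hp hq hk
    have B := intT1 p q (Real.sin α) (Real.sin α') hp hq hk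
    have Cc := intT3 p q hp hq hk
    have D := intT4 p q (Real.cos α) (Real.cos α') (Real.sin α) (Real.sin α') hp hq hk
    have step1 : solitonDistSq α p α' q = 2*π*((∫ r in Ioi (0:ℝ),
        (p*(2*(1-(p*r)^2)/(1+(p*r)^2)^2)*Real.cos α
          - q*(2*(1-(q*r)^2)/(1+(q*r)^2)^2)*Real.cos α')^2*r)
      + ((∫ r in Ioi (0:ℝ), (p*(2*(1-(p*r)^2)/(1+(p*r)^2)^2)*Real.sin α
          - q*(2*(1-(q*r)^2)/(1+(q*r)^2)^2)*Real.sin α')^2*r)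
      + ((∫ r in Ioi (0:ℝ), (p*(4*(p*r)/(1+(p*r)^2)^2) - q*(4*(q*r)/(1+(q*r)^2)^2))^2*r)
      + (∫ r in Ioi (0:ℝ), ((hh1 (p*r)*Real.cos α - hh1 (q*r)*Real.cos α')^2
          + (hh1 (p*r)*Real.sin α - hh1 (q*r)*Real.sin α')^2)/r^2*r)))) := by
      have I34 : IntegrableOn (fun r =>
          (p*(4*(p*r)/(1+(p*r)^2)^2) - q*(4*(q*r)/(1+(q*r)^2)^2))^2*r
          + ((hh1 (p*r)*Real.cos α - hh1 (q*r)*Real.cos α')^2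
          + (hh1 (p*r)*Real.sin α - hh1 (q*r)*Real.sin α')^2)/r^2*r) (Ioi 0) := Cc.1.add D.1
      have I234 : IntegrableOn (fun r =>
          (p*(2*(1-(p*r)^2)/(1+(p*r)^2)^2)*Real.sin α
            - q*(2*(1-(q*r)^2)/(1+(q*r)^2)^2)*Real.sin α')^2*r
          + ((p*(4*(p*r)/(1+(p*r)^2)^2) - q*(4*(q*r)/(1+(q*r)^2)^2))^2*r
          + ((hh1 (p*r)*Real.cos α - hh1 (q*r)*Real.cos α')^2
          + (hh1 (p*r)*Real.sin α - hh1 (q*r)*Real.sin α')^2)/r^2*r)) (Ioi 0) := B.1.add I34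
      unfold solitonDistSq
      simp only [deriv_comb1, deriv_comb3]
      rw [← integral_add Cc.1 D.1, ← integral_add B.1 I34, ← integral_add A.1 I234]
      congr 1
      apply setIntegral_congr_fun measurableSet_Ioi
      intro r hr
      show _ = _
      ring
    rw [step1, A.2, B.2, Cc.2, D.2]
    set x := Real.log p - Real.log q with hxdef
    have hx0 : x ≠ 0 := by
      rw [hxdef]
      intro h
      apply hne
      have : Real.log p = Real.log q := by linarith [sub_eq_zero.1 h]
      exact Real.log_injOn_pos (mem_Ioi.2 hp) (mem_Ioi.2 hq) this
    have hlqp : Real.log q - Real.log p = -x := by rw [hxdef]; ring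
    have hS : Real.sinh x = (p^2 - q^2)/(2*p*q) := by
      rw [hxdef, Real.sinh_eq, neg_sub, Real.exp_sub, Real.exp_sub,
        Real.exp_log hp, Real.exp_log hq]
      field_simp
    have hC : Real.cosh x = (p^2 + q^2)/(2*p*q) := by
      rw [hxdef, Real.cosh_eq, neg_sub, Real.exp_sub, Real.exp_sub,
        Real.exp_log hp, Real.exp_log hq]
      field_simp
    rw [hfun, if_neg hx0, hlqp, hS, hC]
    rw [Real.cos_sub, Real.cos_sq', Real.cos_sq']
    have hpq : (2:ℝ)*p*q ≠ 0 := by positivity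
    have hpq2 : p^2+q^2 ≠ 0 := by positivity
    have hk2 : p^2 - q^2 ≠ 0 := fun h => hk (by linarith [h])
    have hden : (p^2+q^2)/(2*p*q)+1 ≠ 0 := by
      have h1 : 0 < 2*p*q := by positivity
      have : 0 < (p^2+q^2)/(2*p*q)+1 := by positivity
      exact this.ne'
    field_simp
    ring

lemma exp_poly_bound {x : ℝ} (hx : |x| ≤ 1) :
    |Real.exp x - (1+x+x^2/2+x^3/6+x^4/24)| ≤ |x|^5/100 := by
  have hb := Real.exp_bound hx (n := 5) (by norm_num)
  have hsum : ∑ i ∈ Finset.range 5, x^i / (Nat.factorial i) = 1+x+x^2/2+x^3/6+x^4/24 := by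
    simp [Finset.sum_range_succ, Nat.factorial]
    try ring
  rw [hsum] at hb
  refine hb.trans_eq ?_
  norm_num [Nat.factorial]
  ring

lemma sinh_poly_bound {x : ℝ} (h0 : 0 ≤ x) (h1 : x ≤ 1) :
    x + x^3/6 - x^5/100 ≤ Real.sinh x ∧ Real.sinh x ≤ x + x^3/6 + x^5/100 := by
  have hx : |x| ≤ 1 := by rw [abs_of_nonneg h0]; exact h1
  have hx' : |(-x)| ≤ 1 := by rwa [abs_neg]
  have hb := abs_le.1 (exp_poly_bound hx)
  have hb' := abs_le.1 (exp_poly_bound hx')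
  rw [abs_of_nonneg h0] at hb
  rw [abs_neg, abs_of_nonneg h0] at hb'
  rw [Real.sinh_eq]
  constructor <;> nlinarith [hb.1, hb.2, hb'.1, hb'.2]

lemma cosh_poly_bound {x : ℝ} (h0 : 0 ≤ x) (h1 : x ≤ 1) :
    1 + x^2/2 + x^4/24 - x^5/100 ≤ Real.cosh x
      ∧ Real.cosh x ≤ 1 + x^2/2 + x^4/24 + x^5/100 := by
  have hx : |x| ≤ 1 := by rw [abs_of_nonneg h0]; exact h1
  have hx' : |(-x)| ≤ 1 := by rwa [abs_neg]
  have hb := abs_le.1 (exp_poly_bound hx)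
  have hb' := abs_le.1 (exp_poly_bound hx')
  rw [abs_of_nonneg h0] at hb
  rw [abs_neg, abs_of_nonneg h0] at hb'
  rw [Real.cosh_eq]
  constructor <;> nlinarith [hb.1, hb.2, hb'.1, hb'.2]

lemma one_sub_cos_bounds {a : ℝ} (ha : |a| ≤ 1/2) :
    a^2/3 ≤ 1 - Real.cos a ∧ 1 - Real.cos a ≤ (3/4)*a^2 := by
  have ha1 : |a| ≤ 1 := le_trans ha (by norm_num)
  have hb := abs_le.1 (Real.cos_bound ha1)
  have h4 : |a|^4 ≤ |a|^2 * (1/2)^2 := by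
    have : |a|^2 ≤ (1/2)^2 := by
      apply pow_le_pow_left₀ (abs_nonneg a) ha
    nlinarith [abs_nonneg a, sq_nonneg (|a|)]
  have habs : |a|^2 = a^2 := sq_abs a
  constructor <;> nlinarith [hb.1, hb.2]

lemma hfun_even (x : ℝ) : hfun (-x) = hfun x := by
  unfold hfun
  rcases eq_or_ne x 0 with rfl | h
  · simp
  · rw [if_neg (neg_ne_zero.2 h), if_neg h, Real.sinh_neg, Real.cosh_neg]
    ring

lemma hfun_bounds_pos {x : ℝ} (h0 : 0 < x) (h1 : x ≤ 1/2) :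
    3/8 ≤ hfun x ∧ hfun x ≤ 2 := by
  have hs := sinh_poly_bound h0.le (by linarith)
  have h2x : (0:ℝ) ≤ 2*x := by linarith
  have hs2 := sinh_poly_bound h2x (by linarith)
  have hsc : Real.sinh x * Real.cosh x = Real.sinh (2*x) / 2 := by
    rw [Real.sinh_two_mul]; ring
  have hspos : 0 < Real.sinh x := Real.sinh_pos_iff.2 h0
  have hx2 : x^2 ≤ 1/4 := by nlinarith
  have h53 : x^5 ≤ x^3/4 := by
    nlinarith [mul_le_mul_of_nonneg_left hx2 (le_of_lt (pow_pos h0 3))]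
  have hsx : x ≤ Real.sinh x := by linarith [hs.1, pow_pos h0 3]
  have hcube_lo : x^3 ≤ Real.sinh x^3 := pow_le_pow_left₀ h0.le hsx 3
  have hcube_hi : Real.sinh x^3 ≤ (x + x^3/6 + x^5/100)^3 :=
    pow_le_pow_left₀ hspos.le hs.2 3
  rw [hfun, if_neg h0.ne']
  have hden := pow_pos hspos 3
  constructor
  · rw [le_div_iff₀ hden]
    have hBpos : (0:ℝ) ≤ x + x^3/6 + x^5/100 := by positivity
    have hB : x + x^3/6 + x^5/100 ≤ (107/100)*x := by
      nlinarith [hx2, h53, pow_pos h0 3]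
    have hB3 : (x+x^3/6+x^5/100)^3 ≤ ((107/100)*x)^3 := pow_le_pow_left₀ hBpos hB 3
    have key : (3/8)*(x + x^3/6 + x^5/100)^3 ≤ Real.sinh (2*x)/2 - x := by
      nlinarith [hs2.1, hB3, pow_pos h0 3, h53]
    nlinarith [hcube_hi]
  · rw [div_le_iff₀ hden]
    have key : Real.sinh (2*x)/2 - x ≤ 2*x^3 := by
      nlinarith [hs2.2, pow_pos h0 3, pow_pos h0 5, h53, hx2]
    nlinarith [hcube_lo]

lemma sq_ratio_bounds_pos {x : ℝ} (h0 : 0 < x) (h1 : x ≤ 1/2) :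
    x^2/3 ≤ Real.sinh x^2/(Real.cosh x+1)
      ∧ Real.sinh x^2/(Real.cosh x+1) ≤ (3/4)*x^2 := by
  have hs := sinh_poly_bound h0.le (by linarith)
  have hc := cosh_poly_bound h0.le (by linarith)
  have hc1 : (1:ℝ) ≤ Real.cosh x := Real.one_le_cosh x
  have hden : (0:ℝ) < Real.cosh x + 1 := by linarith
  have hspos : 0 < Real.sinh x := Real.sinh_pos_iff.2 h0
  have hx2 : x^2 ≤ 1/4 := by nlinarith
  have h53 : x^5 ≤ x^3/4 := by
    nlinarith [mul_le_mul_of_nonneg_left hx2 (le_of_lt (pow_pos h0 3))]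
  have hsx : x ≤ Real.sinh x := by linarith [hs.1, pow_pos h0 3]
  have hsq_lo : x^2 ≤ Real.sinh x^2 := pow_le_pow_left₀ h0.le hsx 2
  have hsq_hi : Real.sinh x^2 ≤ (x + x^3/6 + x^5/100)^2 :=
    pow_le_pow_left₀ hspos.le hs.2 2
  constructor
  · rw [div_le_div_iff₀ (by norm_num) hden]
    nlinarith [hc.2, hsq_lo]
  · rw [div_le_iff₀ hden]
    nlinarith [hsq_hi, hc1]

lemma hfun_bounds {x : ℝ} (hx : |x| ≤ 1/2) : 3/8 ≤ hfun x ∧ hfun x ≤ 2 := by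
  rcases lt_trichotomy x 0 with h | h | h
  · rw [← hfun_even x]
    exact hfun_bounds_pos (by linarith) (by linarith [(abs_le.1 hx).1])
  · subst h
    rw [hfun, if_pos rfl]
    norm_num
  · exact hfun_bounds_pos h (abs_le.1 hx).2

lemma sq_ratio_bounds {x : ℝ} (hx : |x| ≤ 1/2) :
    x^2/3 ≤ Real.sinh x^2/(Real.cosh x+1)
      ∧ Real.sinh x^2/(Real.cosh x+1) ≤ (3/4)*x^2 := by
  rcases lt_trichotomy x 0 with h | h | h
  · have := sq_ratio_bounds_pos (x := -x) (by linarith) (by linarith [(abs_le.1 hx).1])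
    simpa [Real.sinh_neg, Real.cosh_neg] using this
  · subst h
    simp
  · exact sq_ratio_bounds_pos h (abs_le.1 hx).2

lemma Ebound (a x : ℝ) (ha : |a| ≤ 1/2) (hx : |x| ≤ 1/2) :
    (a^2+x^2)/8 ≤ hfun x * ((1 - Real.cos a) + Real.sinh x^2/(Real.cosh x+1))
    ∧ hfun x * ((1 - Real.cos a) + Real.sinh x^2/(Real.cosh x+1)) ≤ 2*(a^2+x^2) := by
  obtain ⟨hc1, hc2⟩ := one_sub_cos_bounds ha
  obtain ⟨hf1, hf2⟩ := hfun_bounds hx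
  obtain ⟨hr1, hr2⟩ := sq_ratio_bounds hx
  have hsum_lo : (a^2+x^2)/3 ≤ (1 - Real.cos a) + Real.sinh x^2/(Real.cosh x+1) := by
    linarith
  have hsum_hi : (1 - Real.cos a) + Real.sinh x^2/(Real.cosh x+1) ≤ (3/4)*(a^2+x^2) := by
    linarith
  have hsum_nonneg : 0 ≤ (1 - Real.cos a) + Real.sinh x^2/(Real.cosh x+1) :=
    le_trans (by positivity) hsum_lo
  constructor
  · calc (a^2+x^2)/8 = (3/8)*((a^2+x^2)/3) := by ring
      _ ≤ hfun x * ((1 - Real.cos a) + Real.sinh x^2/(Real.cosh x+1)) :=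
        mul_le_mul hf1 hsum_lo (by positivity) (le_trans (by norm_num) hf1)
  · calc hfun x * ((1 - Real.cos a) + Real.sinh x^2/(Real.cosh x+1))
        ≤ 2 * ((3/4)*(a^2+x^2)) := mul_le_mul hf2 hsum_hi hsum_nonneg (by norm_num)
      _ ≤ 2*(a^2+x^2) := by nlinarith [sq_nonneg a, sq_nonneg x]

set_option maxHeartbeats 1000000 in
/-- Comparison of soliton distances: for parameters with small
`s = |α−α̃| + |log(λ/λ̃)|`, one has `‖Q_{α,λ} − Q_{α̃,λ̃}‖_{Ḣ¹(ℝ²)} ≈ s/(1+s)`,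
with implicit constants independent of the parameters. -/
theorem soliton_dist_comparison :
    ∃ δ > (0 : ℝ), ∃ c > (0 : ℝ), ∃ C > (0 : ℝ),
      ∀ α lam α' lam' : ℝ, 0 < lam → 0 < lam' →
        |α - α'| + |Real.log (lam / lam')| ≤ δ →
        c * ((|α - α'| + |Real.log (lam / lam')|)
              / (1 + |α - α'| + |Real.log (lam / lam')|))
            ≤ Real.sqrt (solitonDistSq α lam α' lam')
          ∧ Real.sqrt (solitonDistSq α lam α' lam')
            ≤ C * ((|α - α'| + |Real.log (lam / lam')|)
              / (1 + |α - α'| + |Real.log (lam / lam')|)) := by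
  refine ⟨1/2, by norm_num, 1, by norm_num, 17, by norm_num, ?_⟩
  intro α lam α' lam' hlam hlam' hsmall
  set a := α - α' with hadef
  set x := Real.log (lam / lam') with hxdef
  have hxeq : x = Real.log lam - Real.log lam' := Real.log_div hlam.ne' hlam'.ne'
  set s := |a| + |x| with hsdef
  have hs0 : (0:ℝ) ≤ s := by positivity
  have hshalf : s ≤ 1/2 := hsmall
  have ha : |a| ≤ 1/2 := by
    have := abs_nonneg x
    simp only [hsdef] at hshalf
    linarith
  have hx : |x| ≤ 1/2 := by
    have := abs_nonneg a
    linarith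
  have hD : solitonDistSq α lam α' lam'
      = 16*π*(hfun x * ((1 - Real.cos a) + Real.sinh x^2/(Real.cosh x+1))) := by
    rw [solitonDistSq_eq α lam α' lam' hlam hlam', ← hxeq, ← hadef]
  obtain ⟨hlo, hhi⟩ := Ebound a x ha hx
  set E := hfun x * ((1 - Real.cos a) + Real.sinh x^2/(Real.cosh x+1)) with hEdef
  have hE0 : 0 ≤ E := le_trans (by positivity) hlo
  clear_value a x s E
  have hpi_lo : (3:ℝ) ≤ π := by linarith [Real.pi_gt_three]
  have hpi_hi : π ≤ 3.15 := by linarith [Real.pi_lt_d2]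
  have hsq2 : a^2+x^2 ≤ s^2 := by
    nlinarith [abs_nonneg a, abs_nonneg x, sq_abs a, sq_abs x]
  have hsq1 : s^2 ≤ 2*(a^2+x^2) := by
    nlinarith [sq_nonneg (|a| - |x|), sq_abs a, sq_abs x]
  have hrw : 1 + |a| + |x| = 1 + s := by
    rw [hsdef]; ring
  rw [hrw]
  have h1s : (0:ℝ) < 1 + s := by linarith
  constructor
  · -- lower bound
    have h1 : s^2 ≤ solitonDistSq α lam α' lam' := by
      rw [hD]
      have e1 : s^2 ≤ 16*E := by linarith [hlo, hsq1]
      have e2 : 16*E ≤ 16*π*E := by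
        nlinarith [mul_nonneg (show (0:ℝ) ≤ π-1 by linarith) hE0]
      linarith
    have h2 : s ≤ Real.sqrt (solitonDistSq α lam α' lam') := by
      have := Real.sqrt_le_sqrt h1
      rwa [Real.sqrt_sq hs0] at this
    have h3 : s/(1+s) ≤ s := div_le_self hs0 (by linarith)
    rw [one_mul]
    exact le_trans h3 h2
  · -- upper bound
    have h4 : solitonDistSq α lam α' lam' ≤ (11*s)^2 := by
      rw [hD]
      have e1 : 16*π*E ≤ 16*π*(2*(a^2+x^2)) :=
        mul_le_mul_of_nonneg_left hhi (by positivity : (0:ℝ) ≤ 16*π)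
      have e2 : π*(2*(a^2+x^2)) ≤ 3.15*(2*(a^2+x^2)) :=
        mul_le_mul_of_nonneg_right hpi_hi (by positivity : (0:ℝ) ≤ 2*(a^2+x^2))
      have e3 : (a^2+x^2) ≤ s^2 := hsq2
      nlinarith [sq_nonneg s, e1, e2, e3]
    have h5 : Real.sqrt (solitonDistSq α lam α' lam') ≤ 11*s := by
      have := Real.sqrt_le_sqrt h4
      rwa [Real.sqrt_sq (by linarith : (0:ℝ) ≤ 11*s)] at this
    have h6 : 11*s ≤ 17*(s/(1+s)) := by
      rw [mul_div_assoc']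
      rw [le_div_iff₀ h1s]
      nlinarith
    exact le_trans h5 h6

end
end
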